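/- Let t ≥ 4 and m ≥ 2 be integers, and let 1 ≤ s ≤ ⌊(t−1)/2⌋. Let μ^s be the partition whose β-set is ⋃_{j=1}^{s} { k·t + (t−2j) : 0 ≤ k ≤ m−1 }. Then μ^s is a (t, mt−1)-core partition with distinct parts, and its size equals −s²·(m²+2m)/2 + s·(m²t+mt−m)/2. -/

import Mathlib

/-- A partition: a finite weakly decreasing list of positive integers. -/
structure Partn where
  parts : List ℕ
  pos : ∀ p ∈ parts, 0 < p
  sorted : parts.Pairwise (· ≥ ·)

namespace Partn

/-- The size of a partition: the sum of its parts. -/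
def size (l : Partn) : ℕ := l.parts.sum

/-- The number of rows `k` (0-indexed) with `λ_k ≥ j` (the length of column `j`). -/
def colLen (l : Partn) (j : ℕ) : ℕ := (l.parts.filter (fun p => j ≤ p)).length

/-- The hook length of the box in row `i` (0-indexed) and column `j` (1-indexed):
`λ_i − j + #{k : λ_k ≥ j} − i + 1` (with 1-indexed rows). -/
def hook (l : Partn) (i j : ℕ) : ℕ :=
  (l.parts.getD i 0 - j) + (l.colLen j - (i + 1)) + 1

/-- A partition is a `t`-core if none of its hook lengths is divisible by `t`. -/
def IsCore (t : ℕ) (l : Partn) : Prop :=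
  ∀ i j : ℕ, i < l.parts.length → 1 ≤ j → j ≤ l.parts.getD i 0 → ¬ (t ∣ l.hook i j)

/-- A partition has distinct parts if its parts are strictly decreasing. -/
def DistinctParts (l : Partn) : Prop := l.parts.Pairwise (· > ·)

/-- The β-set of a partition: `{λ_i + ℓ − i : 1 ≤ i ≤ ℓ}` (1-indexed). -/
def betaSet (l : Partn) : Finset ℕ :=
  (Finset.range l.parts.length).image
    (fun i => l.parts.getD i 0 + (l.parts.length - 1 - i))

/-- `nFn t i l` is the number of elements of the β-set of `l` congruent to `i` mod `t`. -/
def nFn (t i : ℕ) (l : Partn) : ℕ :=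
  (l.betaSet.filter (fun x => x % t = i)).card

end Partn

/-!
Hook lengths of a partition are exactly the differences `b - c` with `b` in its β-set and
`c < b` outside it. Hence a β-set closed under `b ↦ b - T` (for `b ≥ T`) gives a `T`-core, and so
does a β-set lying below `T`. The β-set of `μ^s` consists of `m` full rows of the residues
`t - 2j` (`1 ≤ j ≤ s`) modulo `t`, so it is closed under subtracting `t` and is bounded by
`mt - 2`; since these residues share the parity of `t` and avoid `t - 1`, no two β-numbers are
consecutive, which means the parts are distinct. The size is the sum of the `ms` β-numbers
minus `0 + 1 + ⋯ + (ms - 1)`.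
-/

lemma Finset.sum_range_natCast_mul_two {R : Type*} [CommRing R] (n : ℕ) :
    (∑ i ∈ Finset.range n, (i : R)) * 2 = n * (n - 1) := by
  induction n with
  | zero => simp
  | succ n ih => rw [Finset.sum_range_succ, add_mul, ih]; push_cast; ring

lemma Finset.sum_Icc_one_natCast_mul_two {R : Type*} [CommRing R] (n : ℕ) :
    (∑ j ∈ Finset.Icc 1 n, (j : R)) * 2 = n * (n + 1) := by
  induction n with
  | zero => simp
  | succ n ih => rw [Finset.sum_Icc_succ_top (by omega), add_mul, ih]; push_cast; ring

lemma Nat.injective_mul_add {t : ℕ} (ht : t ≠ 0) (c : ℕ) :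
    Function.Injective fun k => k * t + c :=
  (add_left_injective c).comp (mul_left_injective₀ ht)

lemma Nat.eq_and_eq_of_mul_add_eq_mul_add {t k k' r r' : ℕ} (hr : r < t) (hr' : r' < t)
    (h : k * t + r = k' * t + r') : k = k' ∧ r = r' := by
  have hdm := (Nat.div_mod_unique (a := k * t + r) (d := k) (c := r) (by omega)).2
    ⟨by rw [mul_comm]; omega, hr⟩
  have hdm' := (Nat.div_mod_unique (a := k' * t + r') (d := k') (c := r') (by omega)).2
    ⟨by rw [mul_comm]; omega, hr'⟩
  rw [h] at hdm
  exact ⟨hdm.1.symm.trans hdm'.1, hdm.2.symm.trans hdm'.2⟩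

namespace List

/-- Parts `b_i − (ℓ − 1 − i)` read off from β-numbers `b_0 > ⋯ > b_{ℓ-1}`. -/
def partsOfBeta : List ℕ → List ℕ
  | [] => []
  | b :: B => (b - B.length) :: partsOfBeta B

@[simp]
lemma partsOfBeta_nil : partsOfBeta [] = [] := rfl

@[simp]
lemma partsOfBeta_cons (b : ℕ) (B : List ℕ) :
    partsOfBeta (b :: B) = (b - B.length) :: partsOfBeta B := rfl

@[simp]
lemma length_partsOfBeta (B : List ℕ) : (partsOfBeta B).length = B.length := by
  induction B <;> simp [*]

lemma length_lt_of_pairwise_gt_cons {b : ℕ} {B : List ℕ} (hB : (b :: B).Pairwise (· > ·))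
    (h0 : 0 ∉ b :: B) : B.length < b := by
  induction B generalizing b with
  | nil =>
    simp only [mem_singleton] at h0
    simp only [length_nil]
    omega
  | cons c C ih =>
    have hcb : c < b := rel_of_pairwise_cons hB mem_cons_self
    have := ih hB.of_cons (by simp_all)
    simp only [length_cons]
    omega

lemma getD_partsOfBeta_add {B : List ℕ} (hB : B.Pairwise (· > ·)) (h0 : 0 ∉ B) {i : ℕ}
    (hi : i < B.length) : (partsOfBeta B).getD i 0 + (B.length - 1 - i) = B[i] := by
  induction B generalizing i with
  | nil => simp at hi
  | cons b B ih =>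
    cases i with
    | zero =>
      have := length_lt_of_pairwise_gt_cons hB h0
      simp only [partsOfBeta_cons, getD_cons_zero, length_cons, getElem_cons_zero]
      omega
    | succ i =>
      simp only [length_cons] at hi ⊢
      simp only [partsOfBeta_cons, getD_cons_succ, getElem_cons_succ]
      rw [← ih hB.of_cons (by simp_all) (by omega)]
      omega

lemma add_length_add_le_of_mem_partsOfBeta {d c p : ℕ} {B : List ℕ}
    (hB : (c :: B).Pairwise (fun a b => b + d < a)) (h0 : 0 ∉ B) (hp : p ∈ partsOfBeta B) :
    p + B.length + d ≤ c := by
  induction B generalizing c with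
  | nil => simp at hp
  | cons b B ih =>
    have hbc : b + d < c := rel_of_pairwise_cons hB mem_cons_self
    have hB' : (b :: B).Pairwise (· > ·) := hB.of_cons.imp (by omega)
    have hlen := length_lt_of_pairwise_gt_cons hB' h0
    rw [partsOfBeta_cons, mem_cons] at hp
    rcases hp with rfl | hp
    · simp only [length_cons]
      omega
    · have := ih hB.of_cons (by simp_all) hp
      simp only [length_cons]
      omega

lemma pairwise_partsOfBeta {d : ℕ} {B : List ℕ} (hB : B.Pairwise (fun a b => b + d < a))
    (h0 : 0 ∉ B) : (partsOfBeta B).Pairwise (fun p q => q + d ≤ p) := by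
  induction B with
  | nil => simp
  | cons b B ih =>
    refine pairwise_cons.2 ⟨fun q hq => ?_, ih hB.of_cons (by simp_all)⟩
    have := add_length_add_le_of_mem_partsOfBeta hB (by simp_all) hq
    omega

lemma pos_of_mem_partsOfBeta {B : List ℕ} (hB : B.Pairwise (· > ·)) (h0 : 0 ∉ B) {p : ℕ}
    (hp : p ∈ partsOfBeta B) : 0 < p := by
  induction B with
  | nil => simp at hp
  | cons b B ih =>
    rw [partsOfBeta_cons, mem_cons] at hp
    rcases hp with rfl | hp
    · have := length_lt_of_pairwise_gt_cons hB h0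
      omega
    · exact ih hB.of_cons (by simp_all) hp

lemma sum_partsOfBeta_add {B : List ℕ} (hB : B.Pairwise (· > ·)) (h0 : 0 ∉ B) :
    (partsOfBeta B).sum + ∑ i ∈ Finset.range B.length, i = B.sum := by
  induction B with
  | nil => simp
  | cons b B ih =>
    have := length_lt_of_pairwise_gt_cons hB h0
    have := ih hB.of_cons (by simp_all)
    rw [partsOfBeta_cons, sum_cons, sum_cons, length_cons, Finset.sum_range_succ]
    omega

lemma lt_length_filter_le_iff {L : List ℕ} (hL : L.Pairwise (· ≥ ·)) (j : ℕ) {i : ℕ}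
    (hi : i < L.length) : i < (L.filter (j ≤ ·)).length ↔ j ≤ L[i] := by
  induction L generalizing i with
  | nil => simp at hi
  | cons a L ih =>
    have hle : ∀ b ∈ L, b ≤ a := fun b hb => rel_of_pairwise_cons hL hb
    by_cases hja : j ≤ a
    · rw [filter_cons_of_pos (by simpa using hja)]
      cases i with
      | zero => simpa using hja
      | succ i => simpa using ih hL.of_cons (i := i) (by simpa using hi)
    · have hnil : L.filter (j ≤ ·) = [] :=
        filter_eq_nil_iff.2 fun b hb hjb => hja ((decide_eq_true_iff.1 hjb).trans (hle b hb))
      rw [filter_cons_of_neg (by simpa using hja), hnil]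
      cases i with
      | zero => simpa using hja
      | succ i =>
        simp only [length_nil, Nat.not_lt_zero, false_iff, getElem_cons_succ]
        exact fun h => hja (h.trans (hle _ (getElem_mem _)))

end List

namespace Partn

lemma colLen_le_length (l : Partn) (j : ℕ) : l.colLen j ≤ l.parts.length :=
  List.length_filter_le _ _

lemma lt_colLen_iff (l : Partn) (j : ℕ) {i : ℕ} (hi : i < l.parts.length) :
    i < l.colLen j ↔ j ≤ l.parts.getD i 0 := by
  rw [List.getD_eq_getElem _ _ hi]
  exact List.lt_length_filter_le_iff l.sorted j hi

lemma exists_notMem_betaSet_add_hook_mem (l : Partn) {i j : ℕ} (hi : i < l.parts.length)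
    (hj : 1 ≤ j) (hji : j ≤ l.parts.getD i 0) :
    ∃ c ∉ l.betaSet, c + l.hook i j ∈ l.betaSet := by
  have hcol := l.colLen_le_length j
  refine ⟨(j - 1) + (l.parts.length - l.colLen j), fun hc => ?_, ?_⟩
  · obtain ⟨i', hi', heq⟩ := Finset.mem_image.1 hc
    rw [Finset.mem_range] at hi'
    have := l.lt_colLen_iff j hi'
    omega
  · have := (l.lt_colLen_iff j hi).2 hji
    refine Finset.mem_image.2 ⟨i, Finset.mem_range.2 hi, ?_⟩
    unfold hook
    omega

lemma isCore_of_sub_mem_betaSet (l : Partn) (T : ℕ)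
    (h : ∀ b ∈ l.betaSet, T ≤ b → b - T ∈ l.betaSet) : l.IsCore T := by
  rintro i j hi hj hji ⟨d, hd⟩
  obtain ⟨c, hc, hcd⟩ := l.exists_notMem_betaSet_add_hook_mem hi hj hji
  suffices ∀ n, c + T * n ∈ l.betaSet → c ∈ l.betaSet from hc (this d (hd ▸ hcd))
  intro n
  induction n with
  | zero => simp
  | succ n ih =>
    intro hmem
    rw [Nat.mul_succ, ← add_assoc] at hmem
    exact ih (by simpa using h _ hmem (Nat.le_add_left _ _))

lemma isCore_of_lt (l : Partn) (T : ℕ) (h : ∀ b ∈ l.betaSet, b < T) : l.IsCore T := by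
  rintro i j hi hj hji hT
  obtain ⟨c, -, hcd⟩ := l.exists_notMem_betaSet_add_hook_mem hi hj hji
  have := Nat.le_of_dvd (by unfold hook; omega) hT
  have := h _ hcd
  omega

def ofBetaSet (S : Finset ℕ) (h0 : 0 ∉ S) : Partn where
  parts := List.partsOfBeta (S.sort (· ≥ ·))
  pos _ := List.pos_of_mem_partsOfBeta S.sortedGT_sort.pairwise (by simpa)
  sorted := (List.pairwise_partsOfBeta (d := 0) (by simpa using S.sortedGT_sort.pairwise)
    (by simpa)).imp (by simp)

lemma betaSet_ofBetaSet (S : Finset ℕ) (h0 : 0 ∉ S) : (ofBetaSet S h0).betaSet = S := by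
  have hB := S.sortedGT_sort.pairwise
  have h0' : 0 ∉ S.sort (· ≥ ·) := by simpa
  ext x
  simp only [betaSet, ofBetaSet, List.length_partsOfBeta, Finset.mem_image, Finset.mem_range]
  constructor
  · rintro ⟨i, hi, rfl⟩
    rw [List.getD_partsOfBeta_add hB h0' hi, ← Finset.mem_sort (· ≥ ·)]
    exact List.getElem_mem _
  · intro hx
    obtain ⟨i, hi, rfl⟩ := List.getElem_of_mem ((Finset.mem_sort (· ≥ ·)).2 hx)
    exact ⟨i, hi, List.getD_partsOfBeta_add hB h0' hi⟩

lemma size_ofBetaSet_add (S : Finset ℕ) (h0 : 0 ∉ S) :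
    (ofBetaSet S h0).size + ∑ i ∈ Finset.range S.card, i = ∑ b ∈ S, b := by
  rw [← Finset.length_sort (· ≥ ·), size, ofBetaSet,
    List.sum_partsOfBeta_add S.sortedGT_sort.pairwise (by simpa), Finset.sum_eq_multiset_sum,
    ← Finset.sort_eq S (· ≥ ·), Multiset.map_id', Multiset.sum_coe]

lemma distinctParts_ofBetaSet (S : Finset ℕ) (h0 : 0 ∉ S) (hS : ∀ b ∈ S, b + 1 ∉ S) :
    (ofBetaSet S h0).DistinctParts := by
  have hB : (S.sort (· ≥ ·)).Pairwise (fun a b => b + 1 < a) := by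
    refine S.sortedGT_sort.pairwise.imp_of_mem fun {a b} ha hb hab => ?_
    rw [Finset.mem_sort] at ha hb
    have : a ≠ b + 1 := by rintro rfl; exact hS b hb ha
    omega
  exact (List.pairwise_partsOfBeta hB (by simpa)).imp (by omega)

lemma cast_size_ofBetaSet (S : Finset ℕ) (h0 : 0 ∉ S) :
    ((ofBetaSet S h0).size : ℚ) = ∑ b ∈ S, (b : ℚ) - S.card * (S.card - 1) / 2 := by
  have h := congrArg (Nat.cast (R := ℚ)) (size_ofBetaSet_add S h0)
  push_cast at h
  linear_combination h - Finset.sum_range_natCast_mul_two (R := ℚ) S.card / 2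

end Partn

def muBetaSet (t m s : ℕ) : Finset ℕ :=
  (Finset.Icc 1 s).biUnion fun j => (Finset.range m).image fun k => k * t + (t - 2 * j)

section muBetaSet

variable {t m s : ℕ}

lemma mem_muBetaSet {b : ℕ} :
    b ∈ muBetaSet t m s ↔ ∃ j, (1 ≤ j ∧ j ≤ s) ∧ ∃ k < m, k * t + (t - 2 * j) = b := by
  simp [muBetaSet]

lemma zero_notMem_muBetaSet (hst : 2 * s < t) : 0 ∉ muBetaSet t m s := by
  rw [mem_muBetaSet]
  omega

lemma sub_mem_muBetaSet (hst : 2 * s < t) {b : ℕ} (hb : b ∈ muBetaSet t m s) (htb : t ≤ b) :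
    b - t ∈ muBetaSet t m s := by
  obtain ⟨j, hj, k, hk, rfl⟩ := mem_muBetaSet.1 hb
  cases k with
  | zero => omega
  | succ k => exact mem_muBetaSet.2 ⟨j, hj, k, by omega, by rw [add_one_mul]; omega⟩

lemma lt_of_mem_muBetaSet (hst : 2 * s < t) {b : ℕ} (hb : b ∈ muBetaSet t m s) :
    b < m * t - 1 := by
  obtain ⟨j, hj, k, hk, rfl⟩ := mem_muBetaSet.1 hb
  have : (k + 1) * t ≤ m * t := Nat.mul_le_mul_right t hk
  rw [add_one_mul] at this
  omega

/-- All residues `t − 2j` have the parity of `t` and lie in `[1, t − 2]`. -/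
lemma add_one_notMem_muBetaSet (hst : 2 * s < t) {b : ℕ} (hb : b ∈ muBetaSet t m s) :
    b + 1 ∉ muBetaSet t m s := by
  obtain ⟨j, hj, k, -, rfl⟩ := mem_muBetaSet.1 hb
  rw [mem_muBetaSet]
  rintro ⟨j', hj', k', -, h⟩
  have := Nat.eq_and_eq_of_mul_add_eq_mul_add (t := t) (k := k') (k' := k) (r := t - 2 * j')
    (r' := t - 2 * j + 1) (by omega) (by omega) (by omega)
  omega

lemma pairwiseDisjoint_muBetaSet (hst : 2 * s < t) :
    (Finset.Icc 1 s : Set ℕ).PairwiseDisjoint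
      fun j => (Finset.range m).image fun k => k * t + (t - 2 * j) := by
  intro j hj j' hj' hjj'
  simp only [Finset.coe_Icc, Set.mem_Icc] at hj hj'
  refine Finset.disjoint_left.2 fun b hb hb' => hjj' ?_
  simp only [Finset.mem_image] at hb hb'
  obtain ⟨k, -, rfl⟩ := hb
  obtain ⟨k', -, h⟩ := hb'
  have := Nat.eq_and_eq_of_mul_add_eq_mul_add (by omega) (by omega) h
  omega

lemma card_muBetaSet (hst : 2 * s < t) : (muBetaSet t m s).card = m * s := by
  rw [muBetaSet, Finset.card_biUnion (pairwiseDisjoint_muBetaSet hst)]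
  rw [Finset.sum_congr rfl fun j _ =>
    Finset.card_image_of_injective _ (Nat.injective_mul_add (show t ≠ 0 by omega) (t - 2 * j))]
  simp [mul_comm]

lemma sum_muBetaSet (hst : 2 * s < t) :
    ∑ b ∈ muBetaSet t m s, (b : ℚ) = s * t * m * (m + 1) / 2 - m * s * (s + 1) := by
  rw [muBetaSet, Finset.sum_biUnion (pairwiseDisjoint_muBetaSet hst)]
  have hinner : ∀ j ∈ Finset.Icc 1 s,
      ∑ b ∈ (Finset.range m).image (fun k => k * t + (t - 2 * j)), (b : ℚ) =
        (∑ k ∈ Finset.range m, (k : ℚ)) * t + m * t - 2 * m * j := by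
    intro j hj
    have : 2 * j ≤ t := by rw [Finset.mem_Icc] at hj; omega
    rw [Finset.sum_image fun _ _ _ _ h => Nat.injective_mul_add (show t ≠ 0 by omega) _ h]
    simp only [Nat.cast_add, Nat.cast_mul, Nat.cast_sub this, Finset.sum_add_distrib,
      Finset.sum_mul, Finset.sum_const, Finset.card_range, nsmul_eq_mul]
    push_cast
    ring
  rw [Finset.sum_congr rfl hinner, Finset.sum_sub_distrib, ← Finset.mul_sum, Finset.sum_const,
    Nat.card_Icc, Nat.add_sub_cancel, nsmul_eq_mul]
  linear_combination (t : ℚ) * s / 2 * Finset.sum_range_natCast_mul_two (R := ℚ) m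
    - m * Finset.sum_Icc_one_natCast_mul_two (R := ℚ) s

end muBetaSet

theorem mu_s_t_mt_sub_one_general (t m s : ℕ)
    (hs1 : 1 ≤ s) (hs2 : s ≤ (t - 1) / 2) :
    ∃ lam : Partn,
      lam.betaSet = (Finset.Icc 1 s).biUnion
        (fun j => (Finset.range m).image (fun k => k * t + (t - 2 * j))) ∧
      lam.IsCore t ∧ lam.IsCore (m * t - 1) ∧ lam.DistinctParts ∧
      (lam.size : ℚ) = -(s : ℚ) ^ 2 * ((m : ℚ) ^ 2 + 2 * m) / 2
        + (s : ℚ) * ((m : ℚ) ^ 2 * t + m * t - m) / 2 := by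
  have hst : 2 * s < t := by omega
  have h0 : 0 ∉ muBetaSet t m s := zero_notMem_muBetaSet hst
  have hβ := Partn.betaSet_ofBetaSet _ h0
  refine ⟨Partn.ofBetaSet _ h0, hβ, ?_, ?_, ?_, ?_⟩
  · apply Partn.isCore_of_sub_mem_betaSet
    rw [hβ]
    exact fun _ => sub_mem_muBetaSet hst
  · apply Partn.isCore_of_lt
    rw [hβ]
    exact fun _ => lt_of_mem_muBetaSet hst
  · exact Partn.distinctParts_ofBetaSet _ h0 fun _ => add_one_notMem_muBetaSet hst
  · rw [Partn.cast_size_ofBetaSet, sum_muBetaSet hst, card_muBetaSet hst]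
    push_cast
    ring

/-- The partition `μ^s` with β-set `⋃_(j=1)^s {kt + (t−2j) : 0 ≤ k ≤ m−1}` is a
`(t, mt−1)`-core partition with distinct parts of size
`−s²(m²+2m)/2 + s(m²t+mt−m)/2`. -/
theorem mu_s_t_mt_sub_one (t m s : ℕ) (ht : 4 ≤ t) (hm : 2 ≤ m)
    (hs1 : 1 ≤ s) (hs2 : s ≤ (t - 1) / 2) :
    ∃ lam : Partn,
      lam.betaSet = (Finset.Icc 1 s).biUnion
        (fun j => (Finset.range m).image (fun k => k * t + (t - 2 * j))) ∧
      lam.IsCore t ∧ lam.IsCore (m * t - 1) ∧ lam.DistinctParts ∧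
      (lam.size : ℚ) = -(s : ℚ) ^ 2 * ((m : ℚ) ^ 2 + 2 * m) / 2
        + (s : ℚ) * ((m : ℚ) ^ 2 * t + m * t - m) / 2 :=
  mu_s_t_mt_sub_one_general t m s hs1 hs2
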